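/- Let n be a natural number and let x_1, …, x_{n+2} be complex roots of unity, none equal to 1, with x_1 + x_2 + ⋯ + x_{n+2} = n. Then no x_i equals −1. -/

import Mathlib

theorem stmt6 (n : ℕ) (x : Fin (n + 2) → ℂ)
    (hroot : ∀ i, ∃ m : ℕ, 1 ≤ m ∧ x i ^ m = 1)
    (hne1 : ∀ i, x i ≠ 1)
    (hsum : ∑ i, x i = n) :
    ∀ i, x i ≠ -1 := by
  -- each x i has absolute value 1
  have habs : ∀ i, ‖x i‖ = 1 := by
    intro i
    obtain ⟨m, hm, hxm⟩ := hroot i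
    have h1 : ‖x i‖ ^ m = 1 := by
      rw [← norm_pow, hxm, norm_one]
    rcases pow_eq_one_iff_cases.mp h1 with h | h | h
    · omega
    · exact h
    · exfalso
      have := norm_nonneg (x i)
      linarith [h.1]
  -- real part < 1
  have hre : ∀ i, (x i).re < 1 := by
    intro i
    have hle : (x i).re ≤ 1 := (Complex.re_le_norm _).trans (le_of_eq (habs i))
    rcases lt_or_eq_of_le hle with h | h
    · exact h
    · exfalso
      have hn : Complex.normSq (x i) = 1 := by
        rw [← Complex.sq_norm, habs i]; norm_num
      rw [Complex.normSq_apply] at hn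
      have him : (x i).im = 0 := by nlinarith
      exact hne1 i (Complex.ext (by simpa using h) (by simpa using him))
  -- sum of real parts is n
  have hresum : ∑ i, (x i).re = n := by
    have := congrArg Complex.re hsum
    simpa [Complex.re_sum] using this
  intro j hj
  have hjre : (x j).re = -1 := by rw [hj]; simp
  have hsum' : ∑ i ∈ Finset.univ.erase j, (x i).re = n + 1 := by
    have := Finset.sum_erase_add Finset.univ (fun i => (x i).re) (Finset.mem_univ j)
    rw [hresum] at this
    linarith
  have hcard : (Finset.univ.erase j).card = n + 1 := by
    rw [Finset.card_erase_of_mem (Finset.mem_univ j)]; simp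
  have hlt : ∑ i ∈ Finset.univ.erase j, (x i).re < (n + 1 : ℝ) := by
    calc ∑ i ∈ Finset.univ.erase j, (x i).re < ∑ _i ∈ Finset.univ.erase j, (1 : ℝ) :=
          Finset.sum_lt_sum_of_nonempty (Finset.card_pos.mp (by rw [hcard]; omega))
            (fun i _ => hre i)
      _ = n + 1 := by rw [Finset.sum_const, hcard]; ring
  linarith
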